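/- arXiv:2302.02312 — 2 statements merged into one kernel-verified Lean document; each statement's English description precedes it below -/
import Mathlib

section
/- For |q|<1 and complex x, y: (-x;q)_∞ · Σ_{k≥0} q^{k(k-1)} y^k / ((q^2;q^2)_k (-x;q)_k) = (-y;q^2)_∞ · Σ_{k≥0} q^{k(2k-1)} x^{2k} / ((q;q)_{2k} (-y;q^2)_k) + (-qy;q^2)_∞ · Σ_{k≥0} q^{k(2k+1)} x^{2k+1} / ((q;q)_{2k+1} (-qy;q^2)_k). -/
noncomputable def qp (a q : ℂ) (k : ℕ) : ℂ := ∏ j ∈ Finset.range k, (1 - a * q ^ j)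
noncomputable def qpi (a q : ℂ) : ℂ := ∏' j : ℕ, (1 - a * q ^ j)

/-! Euler's identity `(-b;q)_∞ = ∑ₙ q^(n choose 2) bⁿ / (q;q)ₙ` follows from the functional
equation `E(z) = (1 + z) E(qz)` of its right side, iterated and passed to the limit. It expands
`(-x;q)_∞ / (-x;q)_k = (-xqᵏ;q)_∞` in the left side into the absolutely convergent double series
`∑_{k,n} e_k(q²) yᵏ · e_n(q) xⁿ · q^(kn)`, with `e` the Euler coefficients. Summing over `k`
first instead, Euler's identity in base `q²` gives `e_n(q) xⁿ (-yqⁿ;q²)_∞`; the even and odd `n`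
produce the two terms of the right side, via `(-yq^(2m);q²)_∞ = (-y;q²)_∞ / (-y;q²)_m` and
`(-yq^(2m+1);q²)_∞ = (-qy;q²)_∞ / (-qy;q²)_m`. -/

open Finset Filter Topology

lemma qp_succ (a q : ℂ) (n : ℕ) : qp a q (n + 1) = qp a q n * (1 - a * q ^ n) :=
  prod_range_succ _ _

lemma norm_mul_pow_le {a q : ℂ} (hq : ‖q‖ ≤ 1) (j : ℕ) : ‖a * q ^ j‖ ≤ ‖a‖ := by
  rw [norm_mul, norm_pow]
  exact mul_le_of_le_one_right (norm_nonneg a) (pow_le_one₀ (norm_nonneg q) hq)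

lemma norm_sq_lt_one {q : ℂ} (hq : ‖q‖ < 1) : ‖q ^ 2‖ < 1 := by
  rw [norm_pow]; exact pow_lt_one₀ (norm_nonneg q) hq two_ne_zero

lemma one_sub_norm_le_norm_one_sub_mul_pow {a q : ℂ} (hq : ‖q‖ ≤ 1) (j : ℕ) :
    1 - ‖a‖ ≤ ‖1 - a * q ^ j‖ :=
  calc 1 - ‖a‖ ≤ ‖(1 : ℂ)‖ - ‖a * q ^ j‖ := by
        rw [norm_one]; linarith [norm_mul_pow_le (a := a) hq j]
    _ ≤ ‖1 - a * q ^ j‖ := norm_sub_norm_le _ _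

lemma qp_ne_zero {a q : ℂ} (ha : ‖a‖ < 1) (hq : ‖q‖ ≤ 1) (n : ℕ) : qp a q n ≠ 0 :=
  prod_ne_zero_iff.mpr fun j _ =>
    norm_pos_iff.mp ((sub_pos.mpr ha).trans_le (one_sub_norm_le_norm_one_sub_mul_pow hq j))

lemma multipliable_one_sub_mul_pow (a : ℂ) {q : ℂ} (hq : ‖q‖ < 1) :
    Multipliable fun j : ℕ => 1 - a * q ^ j := by
  have hs : Summable fun j : ℕ => ‖-(a * q ^ j)‖ := by
    simpa only [norm_neg, norm_mul, norm_pow] using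
      (summable_geometric_of_lt_one (norm_nonneg q) hq).mul_left ‖a‖
  simpa only [← sub_eq_add_neg] using multipliable_one_add_of_summable hs

lemma qp_mul_qpi_mul_pow (a : ℂ) {q : ℂ} (hq : ‖q‖ < 1) (k : ℕ) :
    qp a q k * qpi (a * q ^ k) q = qpi a q := by
  have hshift : (fun j : ℕ => 1 - a * q ^ k * q ^ j) = fun j => 1 - a * q ^ (j + k) := by
    funext j; ring
  have hm : Multipliable fun j : ℕ => 1 - a * q ^ (j + k) := by
    rw [← hshift]; exact multipliable_one_sub_mul_pow (a * q ^ k) hq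
  rw [qp, qpi, qpi, hshift]
  exact Multipliable.prod_mul_tprod_nat_mul' (f := fun j => 1 - a * q ^ j) hm

lemma qpi_div_qp (a : ℂ) {q : ℂ} (hq : ‖q‖ < 1) {k : ℕ} (hk : qp a q k ≠ 0) :
    qpi a q / qp a q k = qpi (a * q ^ k) q := by
  rw [div_eq_iff hk, ← qp_mul_qpi_mul_pow a hq k, mul_comm]

noncomputable def eulerCoeff (q : ℂ) (n : ℕ) : ℂ := q ^ n.choose 2 / qp q q n

lemma eulerCoeff_zero (q : ℂ) : eulerCoeff q 0 = 1 := by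
  simp [eulerCoeff, qp]

lemma eulerCoeff_succ_mul {q : ℂ} (hq : ‖q‖ < 1) (n : ℕ) :
    eulerCoeff q (n + 1) * (1 - q * q ^ n) = eulerCoeff q n * q ^ n := by
  have hn := qp_ne_zero hq hq.le n
  have hn1 := qp_ne_zero hq hq.le (n + 1)
  rw [qp_succ] at hn1
  have hfac : 1 - q ^ n * q ≠ 0 := by rw [mul_comm]; exact right_ne_zero_of_mul hn1
  rw [eulerCoeff, eulerCoeff, Nat.choose_succ_succ', Nat.choose_one_right, qp_succ, pow_add]
  field_simp

lemma summable_norm_eulerCoeff_mul_pow {q : ℂ} (hq : ‖q‖ < 1) (z : ℂ) :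
    Summable fun n => ‖eulerCoeff q n * z ^ n‖ := by
  have hq1 : 0 < 1 - ‖q‖ := sub_pos.mpr hq
  have hratio : Tendsto (fun n : ℕ => ‖q‖ ^ n * ‖z‖ / (1 - ‖q‖)) atTop (𝓝 0) := by
    simpa using
      ((tendsto_pow_atTop_nhds_zero_of_lt_one (norm_nonneg q) hq).mul_const ‖z‖).div_const _
  refine summable_of_ratio_norm_eventually_le (r := 1 / 2) (by norm_num) ?_
  filter_upwards [hratio.eventually_le_const (by norm_num : (0 : ℝ) < 1 / 2)] with n hn
  rw [norm_norm, norm_norm]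
  have hrec : ‖eulerCoeff q (n + 1) * z ^ (n + 1)‖ * ‖1 - q * q ^ n‖
      = ‖q‖ ^ n * ‖z‖ * ‖eulerCoeff q n * z ^ n‖ := by
    rw [← norm_mul, mul_right_comm, eulerCoeff_succ_mul hq, pow_succ]
    simp only [norm_mul, norm_pow]
    ring
  have hlow := one_sub_norm_le_norm_one_sub_mul_pow (a := q) hq.le n
  rw [div_le_iff₀ hq1] at hn
  nlinarith [norm_nonneg (eulerCoeff q (n + 1) * z ^ (n + 1)),
    norm_nonneg (eulerCoeff q n * z ^ n)]

lemma summable_eulerCoeff_mul_pow {q : ℂ} (hq : ‖q‖ < 1) (z : ℂ) :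
    Summable fun n => eulerCoeff q n * z ^ n :=
  (summable_norm_eulerCoeff_mul_pow hq z).of_norm

lemma tsum_eulerCoeff_mul_pow_eq_one_add_mul {q : ℂ} (hq : ‖q‖ < 1) (z : ℂ) :
    ∑' n, eulerCoeff q n * z ^ n = (1 + z) * ∑' n, eulerCoeff q n * (q * z) ^ n := by
  have hg := (summable_eulerCoeff_mul_pow hq (q * z)).hasSum
  refine ((hasSum_nat_add_iff' 1).mp ?_).tsum_eq
  convert ((hasSum_nat_add_iff' 1).mpr hg).add (hg.mul_left z) using 1
  · funext n
    linear_combination z ^ (n + 1) * eulerCoeff_succ_mul hq n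
  · simp only [sum_range_one, pow_zero, mul_one, eulerCoeff_zero]
    ring

lemma tsum_eulerCoeff_mul_pow_eq_prod_mul {q : ℂ} (hq : ‖q‖ < 1) (z : ℂ) (N : ℕ) :
    ∑' n, eulerCoeff q n * z ^ n
      = (∏ j ∈ range N, (1 + z * q ^ j)) * ∑' n, eulerCoeff q n * (q ^ N * z) ^ n := by
  induction N with
  | zero => simp
  | succ N ih =>
    rw [ih, tsum_eulerCoeff_mul_pow_eq_one_add_mul hq, prod_range_succ, ← mul_assoc q,
      ← pow_succ']
    ring

lemma tendsto_tsum_eulerCoeff_mul_pow_mul_pow {q : ℂ} (hq : ‖q‖ < 1) (z : ℂ) :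
    Tendsto (fun N : ℕ => ∑' n, eulerCoeff q n * (q ^ N * z) ^ n) atTop (𝓝 1) := by
  have hzero : ∑' n, eulerCoeff q n * (0 : ℂ) ^ n = 1 := by
    rw [tsum_eq_single 0 fun n hn => by simp [hn], pow_zero, mul_one, eulerCoeff_zero]
  have hqN : Tendsto (fun N : ℕ => q ^ N * z) atTop (𝓝 0) := by
    simpa using (tendsto_pow_atTop_nhds_zero_of_norm_lt_one hq).mul_const z
  rw [← hzero]
  refine tendsto_tsum_of_dominated_convergence (summable_norm_eulerCoeff_mul_pow hq z)
    (fun n => ((hqN.pow n).const_mul _)) (Eventually.of_forall fun N n => ?_)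
  rw [norm_mul, norm_mul, norm_pow, norm_pow]
  gcongr
  rw [mul_comm]
  exact norm_mul_pow_le hq.le N

theorem qpi_neg_eq_tsum_eulerCoeff {q : ℂ} (hq : ‖q‖ < 1) (b : ℂ) :
    qpi (-b) q = ∑' n, eulerCoeff q n * b ^ n := by
  have hprod : Tendsto (fun N => ∏ j ∈ range N, (1 + b * q ^ j)) atTop (𝓝 (qpi (-b) q)) := by
    simpa only [qpi, neg_mul, sub_neg_eq_add] using
      (multipliable_one_sub_mul_pow (-b) hq).hasProd.tendsto_prod_nat
  have hlim := hprod.mul (tendsto_tsum_eulerCoeff_mul_pow_mul_pow hq b)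
  simp only [← tsum_eulerCoeff_mul_pow_eq_prod_mul hq, mul_one] at hlim
  exact tendsto_nhds_unique hlim tendsto_const_nhds

lemma two_mul_choose_two (n : ℕ) : 2 * n.choose 2 = n * (n - 1) := by
  rw [Nat.choose_two_right, Nat.two_mul_div_two_of_even (Nat.even_mul_pred_self n)]

lemma choose_two_two_mul (m : ℕ) : (2 * m).choose 2 = m * (2 * m - 1) := by
  have h := two_mul_choose_two (2 * m)
  rw [mul_assoc] at h
  omega

lemma choose_two_two_mul_add_one (m : ℕ) : (2 * m + 1).choose 2 = m * (2 * m + 1) := by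
  have h := two_mul_choose_two (2 * m + 1)
  have h' : (2 * m + 1) * (2 * m + 1 - 1) = 2 * (m * (2 * m + 1)) := by
    rw [Nat.add_sub_cancel]; ring
  omega

noncomputable def doubleTerm (q x y : ℂ) (k n : ℕ) : ℂ :=
  eulerCoeff (q ^ 2) k * y ^ k * (eulerCoeff q n * x ^ n) * q ^ (k * n)

section DoubleSeries

variable {q : ℂ} (x y : ℂ)

lemma summable_doubleTerm (hq : ‖q‖ < 1) : Summable (Function.uncurry (doubleTerm q x y)) := by
  refine Summable.of_norm_bounded
    ((summable_norm_eulerCoeff_mul_pow (norm_sq_lt_one hq) y).mul_of_nonneg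
      (summable_norm_eulerCoeff_mul_pow hq x) (fun _ => norm_nonneg _) (fun _ => norm_nonneg _))
    fun p => ?_
  simp only [Function.uncurry_def, doubleTerm, norm_mul, norm_pow]
  exact mul_le_of_le_one_right (by positivity) (pow_le_one₀ (norm_nonneg q) hq.le)

lemma tsum_doubleTerm_right (hq : ‖q‖ < 1) {k : ℕ} (hx : qp (-x) q k ≠ 0) :
    ∑' n, doubleTerm q x y k n
      = qpi (-x) q * (q ^ (k * (k - 1)) * y ^ k / (qp (q ^ 2) (q ^ 2) k * qp (-x) q k)) := by
  have hrow :
      ∑' n, doubleTerm q x y k n = eulerCoeff (q ^ 2) k * y ^ k * qpi (-(x * q ^ k)) q := by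
    rw [qpi_neg_eq_tsum_eulerCoeff hq, ← tsum_mul_left]
    refine tsum_congr fun n => ?_
    rw [doubleTerm, mul_pow, ← pow_mul]
    ring
  rw [hrow, eulerCoeff, ← two_mul_choose_two, pow_mul, neg_mul_eq_neg_mul,
    ← qpi_div_qp (-x) hq hx]
  ring

lemma tsum_doubleTerm_left (hq : ‖q‖ < 1) (n : ℕ) :
    ∑' k, doubleTerm q x y k n = eulerCoeff q n * x ^ n * qpi (-(y * q ^ n)) (q ^ 2) := by
  rw [qpi_neg_eq_tsum_eulerCoeff (norm_sq_lt_one hq), ← tsum_mul_left]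
  refine tsum_congr fun k => ?_
  rw [doubleTerm, mul_pow, ← pow_mul, mul_comm n k]
  ring

lemma tsum_doubleTerm_left_two_mul (hq : ‖q‖ < 1) {m : ℕ} (hy : qp (-y) (q ^ 2) m ≠ 0) :
    ∑' k, doubleTerm q x y k (2 * m)
      = qpi (-y) (q ^ 2) * (q ^ (m * (2 * m - 1)) * x ^ (2 * m) /
          (qp q q (2 * m) * qp (-y) (q ^ 2) m)) := by
  have hexp : -(y * q ^ (2 * m)) = -y * (q ^ 2) ^ m := by ring
  rw [tsum_doubleTerm_left x y hq, eulerCoeff, choose_two_two_mul, hexp,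
    ← qpi_div_qp (-y) (norm_sq_lt_one hq) hy]
  ring

lemma tsum_doubleTerm_left_two_mul_add_one (hq : ‖q‖ < 1) {m : ℕ}
    (hy : qp (-(q * y)) (q ^ 2) m ≠ 0) :
    ∑' k, doubleTerm q x y k (2 * m + 1)
      = qpi (-(q * y)) (q ^ 2) * (q ^ (m * (2 * m + 1)) * x ^ (2 * m + 1) /
          (qp q q (2 * m + 1) * qp (-(q * y)) (q ^ 2) m)) := by
  have hexp : -(y * q ^ (2 * m + 1)) = -(q * y) * (q ^ 2) ^ m := by ring
  rw [tsum_doubleTerm_left x y hq, eulerCoeff, choose_two_two_mul_add_one, hexp,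
    ← qpi_div_qp (-(q * y)) (norm_sq_lt_one hq) hy]
  ring

end DoubleSeries

theorem three_term_quadratic (q x y : ℂ) (hq : ‖q‖ < 1)
    (h1 : ∀ k, qp (-x) q k ≠ 0) (h2 : ∀ k, qp (-y) (q ^ 2) k ≠ 0)
    (h3 : ∀ k, qp (-(q * y)) (q ^ 2) k ≠ 0) :
    qpi (-x) q * ∑' k : ℕ, q ^ (k * (k - 1)) * y ^ k / (qp (q ^ 2) (q ^ 2) k * qp (-x) q k) =
      qpi (-y) (q ^ 2) *
          ∑' k : ℕ, q ^ (k * (2 * k - 1)) * x ^ (2 * k) /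
            (qp q q (2 * k) * qp (-y) (q ^ 2) k) +
        qpi (-(q * y)) (q ^ 2) *
          ∑' k : ℕ, q ^ (k * (2 * k + 1)) * x ^ (2 * k + 1) /
            (qp q q (2 * k + 1) * qp (-(q * y)) (q ^ 2) k) := by
  have hT := summable_doubleTerm x y hq
  have hcols : Summable fun n => ∑' k, doubleTerm q x y k n := hT.prod_symm.prod
  rw [← tsum_mul_left, ← tsum_mul_left, ← tsum_mul_left]
  calc ∑' k, qpi (-x) q * (q ^ (k * (k - 1)) * y ^ k / (qp (q ^ 2) (q ^ 2) k * qp (-x) q k))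
      = ∑' k, ∑' n, doubleTerm q x y k n :=
        tsum_congr fun k => (tsum_doubleTerm_right x y hq (h1 k)).symm
    _ = ∑' n, ∑' k, doubleTerm q x y k n := hT.tsum_comm.symm
    _ = ∑' m, ∑' k, doubleTerm q x y k (2 * m) + ∑' m, ∑' k, doubleTerm q x y k (2 * m + 1) :=
        (tsum_even_add_odd (f := fun n => ∑' k, doubleTerm q x y k n)
          (hcols.comp_injective (mul_right_injective₀ two_ne_zero))
          (hcols.comp_injective fun _ _ h => by simpa using h)).symm
    _ = _ := by
        rw [tsum_congr fun m => tsum_doubleTerm_left_two_mul x y hq (h2 m),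
          tsum_congr fun m => tsum_doubleTerm_left_two_mul_add_one x y hq (h3 m)]
end

section
/- For |q|<1, |p|<1 and complex x, y, r with |r|≤1: Σ_{k≥0} p^{k(k-1)/2} y^k (-r^k x;q)_∞ / (p;p)_k = Σ_{k≥0} q^{k(k-1)/2} x^k (-r^k y;p)_∞ / (q;q)_k. -/
/-!
Euler's identity `(-x;q)_∞ = ∑ₖ q^(k(k-1)/2) xᵏ / (q;q)ₖ` is proved from the functional equation
`E(x) = (1 + x) E(qx)` of the right-hand side `E`: iterating it gives
`E(x) = (-x;q)ₙ E(qⁿx)`, and `E(qⁿx) → E(0) = 1` by dominated convergence.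
Expanding both infinite products of the theorem by Euler's identity turns the two sides into the
row and column sums of the absolutely summable double series
`∑ₖ,ₘ p^(k(k-1)/2) q^(m(m-1)/2) r^(km) yᵏ xᵐ / ((p;p)ₖ (q;q)ₘ)`.
-/

open Finset Filter Topology

namespace DoubleEuler

lemma triangle_succ (k : ℕ) : (k + 1) * (k + 1 - 1) / 2 = k * (k - 1) / 2 + k := by
  rw [← Nat.choose_two_right, ← Nat.choose_two_right, Nat.choose_succ_succ',
    Nat.choose_one_right, add_comm]

lemma qp_succ (a q : ℂ) (k : ℕ) : qp a q (k + 1) = qp a q k * (1 - a * q ^ k) :=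
  prod_range_succ _ _

lemma one_sub_pow_ne_zero {𝕜 : Type*} [NormedDivisionRing 𝕜] {q : 𝕜} (hq : ‖q‖ < 1) {k : ℕ}
    (hk : k ≠ 0) : 1 - q ^ k ≠ 0 := by
  rw [sub_ne_zero, ne_comm]
  exact ne_of_apply_ne norm (by simpa using (pow_lt_one₀ (norm_nonneg q) hq hk).ne)

noncomputable def eulerTerm (q x : ℂ) (k : ℕ) : ℂ := q ^ (k * (k - 1) / 2) * x ^ k / qp q q k

noncomputable def eulerSum (q x : ℂ) : ℂ := ∑' k, eulerTerm q x k

variable {q : ℂ}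

lemma eulerTerm_succ (x : ℂ) (k : ℕ) :
    eulerTerm q x (k + 1) = q ^ k * x / (1 - q ^ (k + 1)) * eulerTerm q x k := by
  simp only [eulerTerm, qp_succ, triangle_succ, ← pow_succ', div_eq_mul_inv, mul_inv]
  ring

lemma eulerTerm_mul (c x : ℂ) (k : ℕ) : eulerTerm q (c * x) k = c ^ k * eulerTerm q x k := by
  rw [eulerTerm, eulerTerm, mul_pow]
  ring

lemma eulerTerm_zero_left (k : ℕ) : eulerTerm q 0 k = if k = 0 then 1 else 0 := by
  rcases k with _ | k <;> simp [eulerTerm, qp]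

lemma eulerTerm_zero_right (x : ℂ) : eulerTerm q x 0 = 1 := by
  simp [eulerTerm, qp]

lemma norm_eulerTerm_le {x y : ℂ} (h : ‖y‖ ≤ ‖x‖) (k : ℕ) :
    ‖eulerTerm q y k‖ ≤ ‖eulerTerm q x k‖ := by
  simp only [eulerTerm, norm_div, norm_mul, norm_pow]
  gcongr

/-- The term ratio `qᵏx / (1 - qᵏ⁺¹)` tends to `0`, so the ratio test applies. -/
lemma summable_norm_eulerTerm (hq : ‖q‖ < 1) (x : ℂ) :
    Summable fun k => ‖eulerTerm q x k‖ := by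
  have hratio : Tendsto (fun k : ℕ => q ^ k * x / (1 - q ^ (k + 1))) atTop (𝓝 0) := by
    have hpow := tendsto_pow_atTop_nhds_zero_of_norm_lt_one hq
    simpa [Pi.div_def] using
      (hpow.mul_const x).div ((hpow.comp (tendsto_add_atTop_nat 1)).const_sub 1) (by simp)
  refine summable_of_ratio_norm_eventually_le (r := 1 / 2) (by norm_num) ?_
  filter_upwards [(tendsto_norm_zero.comp hratio).eventually_le_const one_half_pos] with k hk
  rw [norm_norm, norm_norm, eulerTerm_succ, norm_mul]
  exact mul_le_mul_of_nonneg_right hk (norm_nonneg _)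

lemma summable_eulerTerm (hq : ‖q‖ < 1) (x : ℂ) : Summable (eulerTerm q x) :=
  (summable_norm_eulerTerm hq x).of_norm

lemma eulerTerm_succ_sub (hq : ‖q‖ < 1) (x : ℂ) (k : ℕ) :
    eulerTerm q x (k + 1) - eulerTerm q (q * x) (k + 1) = x * eulerTerm q (q * x) k := by
  have hne := one_sub_pow_ne_zero hq k.succ_ne_zero
  rw [eulerTerm, eulerTerm, eulerTerm, qp_succ, triangle_succ, ← pow_succ']
  field_simp
  ring

lemma eulerSum_zero : eulerSum q 0 = 1 := by
  rw [eulerSum, tsum_eq_single 0 fun k hk => by rw [eulerTerm_zero_left, if_neg hk],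
    eulerTerm_zero_left, if_pos rfl]

lemma eulerSum_eq_one_add_mul (hq : ‖q‖ < 1) (x : ℂ) :
    eulerSum q x = (1 + x) * eulerSum q (q * x) := by
  have hx := summable_eulerTerm hq x
  have hqx := summable_eulerTerm hq (q * x)
  have hshift : ∑' k, eulerTerm q x (k + 1) =
      ∑' k, eulerTerm q (q * x) (k + 1) + x * eulerSum q (q * x) := by
    rw [eulerSum, ← tsum_mul_left, ← ((summable_nat_add_iff 1).2 hqx).tsum_add (hqx.mul_left x)]
    exact tsum_congr fun k => by rw [← eulerTerm_succ_sub hq]; ring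
  have hqx_split : eulerSum q (q * x) = 1 + ∑' k, eulerTerm q (q * x) (k + 1) := by
    rw [eulerSum, hqx.tsum_eq_zero_add, eulerTerm_zero_right]
  rw [eulerSum, hx.tsum_eq_zero_add, eulerTerm_zero_right, hshift, hqx_split]
  ring

lemma eulerSum_eq_prod_mul (hq : ‖q‖ < 1) (x : ℂ) (n : ℕ) :
    eulerSum q x = (∏ j ∈ range n, (1 + x * q ^ j)) * eulerSum q (q ^ n * x) := by
  induction n with
  | zero => simp
  | succ n ih =>
    rw [ih, eulerSum_eq_one_add_mul hq, prod_range_succ, pow_succ', mul_assoc q]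
    ring

lemma tendsto_eulerSum_pow_mul (hq : ‖q‖ < 1) (x : ℂ) :
    Tendsto (fun n => eulerSum q (q ^ n * x)) atTop (𝓝 1) := by
  rw [← eulerSum_zero (q := q)]
  have hpow : Tendsto (fun n => q ^ n * x) atTop (𝓝 0) := by
    simpa using (tendsto_pow_atTop_nhds_zero_of_norm_lt_one hq).mul_const x
  refine tendsto_tsum_of_dominated_convergence (summable_norm_eulerTerm hq x)
    (fun k => ?_) (Eventually.of_forall fun n k => norm_eulerTerm_le ?_ k)
  · have hcont : Continuous fun y => eulerTerm q y k := by unfold eulerTerm; fun_prop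
    exact hcont.continuousAt.tendsto.comp hpow
  · rw [norm_mul, norm_pow]
    exact mul_le_of_le_one_left (norm_nonneg x) (pow_le_one₀ (norm_nonneg q) hq.le)

theorem qpi_neg_eq_eulerSum (hq : ‖q‖ < 1) (x : ℂ) : qpi (-x) q = eulerSum q x := by
  have hfactor : ∀ j : ℕ, 1 - -x * q ^ j = 1 + x * q ^ j := fun j => by ring
  have hprod : Tendsto (fun n => ∏ j ∈ range n, (1 + x * q ^ j)) atTop (𝓝 (qpi (-x) q)) := by
    simp only [qpi, hfactor]
    exact (Complex.multipliable_one_add_of_summable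
      ((summable_geometric_of_norm_lt_one hq).mul_left x)).tendsto_prod_tprod_nat
  have hlim := hprod.mul (tendsto_eulerSum_pow_mul hq x)
  simp only [← eulerSum_eq_prod_mul hq, mul_one] at hlim
  exact tendsto_nhds_unique hlim tendsto_const_nhds

end DoubleEuler

open DoubleEuler in
theorem double_euler (q p x y r : ℂ) (hq : ‖q‖ < 1) (hp : ‖p‖ < 1) (hr : ‖r‖ ≤ 1) :
    ∑' k : ℕ, p ^ (k * (k - 1) / 2) * y ^ k * qpi (-(r ^ k * x)) q / qp p p k =
      ∑' k : ℕ, q ^ (k * (k - 1) / 2) * x ^ k * qpi (-(r ^ k * y)) p / qp q q k := by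
  set F : ℕ → ℕ → ℂ := fun k m => r ^ (k * m) * (eulerTerm p y k * eulerTerm q x m)
  have hrow : ∀ k, p ^ (k * (k - 1) / 2) * y ^ k * qpi (-(r ^ k * x)) q / qp p p k =
      ∑' m, F k m := fun k => by
    rw [qpi_neg_eq_eulerSum hq, eulerSum, mul_div_right_comm, ← eulerTerm, ← tsum_mul_left]
    exact tsum_congr fun m => by rw [eulerTerm_mul, ← pow_mul]; ring
  have hcol : ∀ m, q ^ (m * (m - 1) / 2) * x ^ m * qpi (-(r ^ m * y)) p / qp q q m =
      ∑' k, F k m := fun m => by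
    rw [qpi_neg_eq_eulerSum hp, eulerSum, mul_div_right_comm, ← eulerTerm, ← tsum_mul_left]
    exact tsum_congr fun k => by rw [eulerTerm_mul, ← pow_mul, mul_comm m k]; ring
  have hF : Summable (Function.uncurry F) := by
    refine Summable.of_norm_bounded ((summable_norm_eulerTerm hp y).mul_of_nonneg
      (summable_norm_eulerTerm hq x) (fun _ => norm_nonneg _) (fun _ => norm_nonneg _))
      fun km => ?_
    simp only [Function.uncurry, F, norm_mul, norm_pow]
    exact mul_le_of_le_one_left (by positivity) (pow_le_one₀ (norm_nonneg r) hr)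
  rw [tsum_congr hrow, tsum_congr hcol, hF.tsum_comm]
end
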